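/- arXiv:1602.03052 — 2 statements merged into one kernel-verified Lean document; each statement's English description precedes it below -/
import Mathlib

section
/- For nonnegative integers n, k, m with k ≤ m ≤ n, the difference of Gaussian binomial coefficients [n choose k]_q - [n choose k-1]_q, where by convention [n choose -1]_q = 0, has nonnegative coefficients as a polynomial in q whenever 2k ≤ n (i.e. when k ≤ n-k). -/
open Finset

noncomputable section

/-- The field of rational functions `ℚ(q)`. -/
abbrev K : Type := RatFunc ℚ

/-- The variable `q`. -/
def q : K := RatFunc.X

/-- The Gaussian binomial coefficient `[n choose k]_q` as a rational function. -/
def gbinom (n k : ℕ) : K :=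
  (∏ i ∈ Finset.range k, (1 - q ^ (n - i))) / (∏ i ∈ Finset.range k, (1 - q ^ (i + 1)))

/-
Generalize to `D(n, k, a) = [n, k+1] - q^a [n, k]` with `2k + a < n`; the theorem is the case
`a = 0`. The two `q`-Pascal rules give
  `D(n+1, k+1, a) = D(n, k+1, a) + q^(n-k-1) D(n, k, a+1)` and, for `a ≥ 1`,
  `D(n+1, k+1, a) = D(n, k, a) + q^(k+2) D(n, k+1, a-1)`.
The first stays within the constraint when `2k + a + 2 < n`, the second in the boundary case
`2k + a + 2 = n`, and there with `a = 0` the difference vanishes by the symmetry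
`[2k+1, k+1] = [2k+1, k]`. Since `D(n, 0, a) = 1 + q + ⋯ + q^(n-1) - q^a`, induction on `n` shows
that every `D` has nonnegative coefficients.
-/

theorem q_eq_algebraMap_X : q = algebraMap (Polynomial ℚ) K Polynomial.X :=
  RatFunc.algebraMap_X.symm

theorem one_sub_q_pow_ne_zero {m : ℕ} (hm : m ≠ 0) : (1 : K) - q ^ m ≠ 0 := by
  rw [← neg_ne_zero, neg_sub, q_eq_algebraMap_X, ← map_pow,
    ← map_one (algebraMap (Polynomial ℚ) K), ← map_sub]
  exact RatFunc.algebraMap_ne_zero (Polynomial.X_pow_sub_C_ne_zero (Nat.pos_of_ne_zero hm) 1)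

theorem prod_one_sub_q_pow_succ_ne_zero (k : ℕ) : ∏ i ∈ range k, (1 - q ^ (i + 1)) ≠ 0 :=
  prod_ne_zero_iff.mpr fun _ _ => one_sub_q_pow_ne_zero (Nat.succ_ne_zero _)

theorem gbinom_zero_right (n : ℕ) : gbinom n 0 = 1 := by
  simp [gbinom]

theorem gbinom_eq_zero_of_lt {n k : ℕ} (h : n < k) : gbinom n k = 0 := by
  rw [gbinom, prod_eq_zero (mem_range.mpr h) (by simp), zero_div]

theorem gbinom_one_right (n : ℕ) : gbinom n 1 = ∑ i ∈ range n, q ^ i := by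
  rw [gbinom, div_eq_iff (prod_one_sub_q_pow_succ_ne_zero 1)]
  simp only [prod_range_one, Nat.sub_zero, zero_add, pow_one]
  linear_combination geom_sum_mul q n

theorem gbinom_succ_mul (n k : ℕ) :
    gbinom n (k + 1) * (1 - q ^ (k + 1)) = gbinom n k * (1 - q ^ (n - k)) := by
  have := prod_one_sub_q_pow_succ_ne_zero k
  have := one_sub_q_pow_ne_zero k.add_one_ne_zero
  simp only [gbinom, prod_range_succ]
  field_simp

theorem gbinom_succ_succ_mul (n k : ℕ) :
    gbinom (n + 1) (k + 1) * (1 - q ^ (k + 1)) = gbinom n k * (1 - q ^ (n + 1)) := by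
  have hnum : ∏ i ∈ range (k + 1), (1 - q ^ (n + 1 - i)) =
      (∏ i ∈ range k, (1 - q ^ (n - i))) * (1 - q ^ (n + 1)) := by
    simp [prod_range_succ', mul_comm]
  have := prod_one_sub_q_pow_succ_ne_zero k
  have := one_sub_q_pow_ne_zero k.add_one_ne_zero
  rw [gbinom, gbinom, hnum, prod_range_succ]
  field_simp

theorem gbinom_succ_succ (n k : ℕ) :
    gbinom (n + 1) (k + 1) = gbinom n (k + 1) + q ^ (n - k) * gbinom n k := by
  rcases le_or_gt k n with h | h
  · apply mul_right_cancel₀ (one_sub_q_pow_ne_zero k.add_one_ne_zero)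
    have hpow : q ^ (n - k) * q ^ (k + 1) = q ^ (n + 1) := by
      rw [← pow_add]; congr 1; omega
    linear_combination gbinom_succ_succ_mul n k - gbinom_succ_mul n k + gbinom n k * hpow
  · rw [gbinom_eq_zero_of_lt (by omega : n + 1 < k + 1),
      gbinom_eq_zero_of_lt (by omega : n < k + 1), gbinom_eq_zero_of_lt h, mul_zero, add_zero]

theorem gbinom_succ_succ' (n k : ℕ) :
    gbinom (n + 1) (k + 1) = gbinom n k + q ^ (k + 1) * gbinom n (k + 1) := by
  rcases le_or_gt k n with h | h
  · apply mul_right_cancel₀ (one_sub_q_pow_ne_zero k.add_one_ne_zero)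
    have hpow : q ^ (k + 1) * q ^ (n - k) = q ^ (n + 1) := by
      rw [← pow_add]; congr 1; omega
    linear_combination
      gbinom_succ_succ_mul n k - q ^ (k + 1) * gbinom_succ_mul n k + gbinom n k * hpow
  · rw [gbinom_eq_zero_of_lt (by omega : n + 1 < k + 1),
      gbinom_eq_zero_of_lt (by omega : n < k + 1), gbinom_eq_zero_of_lt h, mul_zero, add_zero]

theorem gbinom_two_mul_add_one_succ (k : ℕ) :
    gbinom (2 * k + 1) (k + 1) = gbinom (2 * k + 1) k := by
  have h := gbinom_succ_mul (2 * k + 1) k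
  rw [show 2 * k + 1 - k = k + 1 by omega] at h
  exact mul_right_cancel₀ (one_sub_q_pow_ne_zero k.add_one_ne_zero) h

def gbinomDiff (n k a : ℕ) : K :=
  gbinom n (k + 1) - q ^ a * gbinom n k

theorem gbinomDiff_zero (n a : ℕ) : gbinomDiff n 0 a = ∑ i ∈ range n, q ^ i - q ^ a := by
  rw [gbinomDiff, gbinom_zero_right, mul_one, gbinom_one_right]

theorem gbinomDiff_two_mul_add_one (k : ℕ) : gbinomDiff (2 * k + 1) k 0 = 0 := by
  rw [gbinomDiff, gbinom_two_mul_add_one_succ, pow_zero, one_mul, sub_self]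

theorem gbinomDiff_succ_succ {n k : ℕ} (a : ℕ) (h : k < n) :
    gbinomDiff (n + 1) (k + 1) a =
      gbinomDiff n (k + 1) a + q ^ (n - (k + 1)) * gbinomDiff n k (a + 1) := by
  have hpow : q ^ a * q ^ (n - k) = q ^ (n - (k + 1)) * q ^ (a + 1) := by
    rw [← pow_add, ← pow_add]; congr 1; omega
  simp only [gbinomDiff, gbinom_succ_succ n (k + 1), gbinom_succ_succ n k]
  linear_combination -gbinom n k * hpow

theorem gbinomDiff_succ_succ_succ (n k a : ℕ) :
    gbinomDiff (n + 1) (k + 1) (a + 1) =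
      gbinomDiff n k (a + 1) + q ^ (k + 2) * gbinomDiff n (k + 1) a := by
  simp only [gbinomDiff, gbinom_succ_succ' n (k + 1), gbinom_succ_succ' n k]
  ring

def natPolynomials : Subsemiring K :=
  ((algebraMap (Polynomial ℚ) K).comp (Polynomial.mapRingHom (Nat.castRingHom ℚ))).rangeS

theorem q_mem_natPolynomials : q ∈ natPolynomials :=
  ⟨Polynomial.X, by simp [q_eq_algebraMap_X]⟩

theorem geom_sum_sub_q_pow_mem_natPolynomials {n a : ℕ} (h : a < n) :
    ∑ i ∈ range n, q ^ i - q ^ a ∈ natPolynomials := by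
  rw [← sum_erase_add _ _ (mem_range.mpr h), add_sub_cancel_right]
  exact sum_mem fun i _ => pow_mem q_mem_natPolynomials i

theorem gbinomDiff_mem_natPolynomials {n k a : ℕ} (h : 2 * k + a < n) :
    gbinomDiff n k a ∈ natPolynomials := by
  induction n generalizing k a with
  | zero => omega
  | succ m ih =>
    have qpow_mul_mem {j : ℕ} {f : K} (hf : f ∈ natPolynomials) :
        q ^ j * f ∈ natPolynomials := mul_mem (pow_mem q_mem_natPolynomials j) hf
    rcases k with _ | k
    · rw [gbinomDiff_zero]
      exact geom_sum_sub_q_pow_mem_natPolynomials (by omega)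
    rcases lt_or_eq_of_le (show 2 * (k + 1) + a ≤ m by omega) with hlt | heq
    · rw [gbinomDiff_succ_succ a (by omega)]
      exact add_mem (ih (by omega)) (qpow_mul_mem (ih (by omega)))
    rcases a with _ | a
    · obtain rfl : m = 2 * (k + 1) := by omega
      rw [gbinomDiff_two_mul_add_one]
      exact zero_mem _
    · rw [gbinomDiff_succ_succ_succ]
      exact add_mem (ih (by omega)) (qpow_mul_mem (ih (by omega)))

theorem gaussian_binomial_difference_nonneg_general (n k : ℕ)
    (h2k : 2 * k ≤ n) :
    ∃ P : Polynomial ℕ,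
      algebraMap (Polynomial ℚ) K (P.map (Nat.castRingHom ℚ)) =
        gbinom n k - (if k = 0 then 0 else gbinom n (k - 1)) := by
  rcases k with _ | k
  · exact ⟨1, by simp [gbinom_zero_right]⟩
  · have h := gbinomDiff_mem_natPolynomials (a := 0) (by omega : 2 * k + 0 < n)
    rw [gbinomDiff, pow_zero, one_mul] at h
    simpa using RingHom.mem_rangeS.mp h

/-- For `k ≤ m ≤ n` with `2k ≤ n`, the difference `[n choose k]_q - [n choose k-1]_q`
(with the convention `[n choose -1]_q = 0`) is a polynomial in `q` with nonnegative
integer coefficients. -/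
theorem gaussian_binomial_difference_nonneg (n k m : ℕ)
    (hkm : k ≤ m) (hmn : m ≤ n) (h2k : 2 * k ≤ n) :
    ∃ P : Polynomial ℕ,
      algebraMap (Polynomial ℚ) K (P.map (Nat.castRingHom ℚ)) =
        gbinom n k - (if k = 0 then 0 else gbinom n (k - 1)) :=
  gaussian_binomial_difference_nonneg_general n k h2k

end
end

section
/- Quadratic transformation (Proposition A.6): as formal power series in x, ∑_{n=0}^∞ (D²;q)_n (R/q;q²)_n / ( (q;q)_n (R/q;q)_n ) · xⁿ = ∑_{k=0}^∞ (D²;q)_{2k} / ( (q²;q²)_k (R;q²)_k ) · (D² x q^{2k}; q)_∞ / (x;q)_∞ · q^{k(2k-2)} R^k x^{2k}. -/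
open Finset

noncomputable section

/-- Coefficients: the field of rational functions over `ℚ` in the formal parameters
`D` (variable 0) and `R/q` (variable 1). -/
abbrev Kc : Type := FractionRing (MvPolynomial (Fin 2) ℚ)

/-- The formal power series ring in the two variables `q` and `x` over `Kc`. -/
abbrev M : Type := MvPowerSeries (Fin 2) Kc

/-- The series variable `q`. -/
def qv : M := MvPowerSeries.X 0

/-- The series variable `x`. -/
def xv : M := MvPowerSeries.X 1

/-- The parameter `D`, regarded as a constant power series. -/
def Dv : M := MvPowerSeries.C (σ := Fin 2) (R := Kc)
  (algebraMap (MvPolynomial (Fin 2) ℚ) Kc (MvPolynomial.X 0))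

/-- The parameter `R/q`, regarded as a constant power series. -/
def Rq : M := MvPowerSeries.C (σ := Fin 2) (R := Kc)
  (algebraMap (MvPolynomial (Fin 2) ℚ) Kc (MvPolynomial.X 1))

/-- The parameter `R = (R/q)·q`. -/
def Rv : M := Rq * qv

/-- The q-Pochhammer symbol `(A;Q)_r = ∏_{j=0}^{r-1}(1 - A Q^j)`. -/
def pch (A Q : M) (r : ℕ) : M := ∏ j ∈ Finset.range r, (1 - A * Q ^ j)

/-!
Reduce modulo `(q^(a+1), x^(b+1))`, which is enough to read off the coefficient of `q^a x^b`.
There Gauss's finite q-binomial theorem, together with `(q^(N-i+1);q)_i ≡ 1`, turns the truncated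
ratio `(Zx;q)_N / (x;q)_N` into the q-binomial series `∑ₙ (Z;q)_n/(q;q)_n xⁿ`. Expanding the
right-hand side and collecting the coefficient of `xⁿ`, the factor `(D²;q)_n` splits off because
`(D²;q)_{2k} (D²q^{2k};q)_{n-2k} = (D²;q)_n`. What remains is the `D`-free identity
`∑ₖ cₖ/(q;q)_{n-2k} = (R/q;q²)_n / ((q;q)_n (R/q;q)_n)` with
`cₖ = q^{k(2k-2)} Rᵏ / ((q²;q²)_k (R;q²)_k)`: both sides satisfy the same first-order recurrence
in `n`, and for the sum the recurrence telescopes.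
-/

theorem sum_sum_mul_pow_eq_of_pow_eq_zero {A : Type*} [CommSemiring A] {y : A} {b c : ℕ}
    (hy : y ^ (b + 1) = 0) (hc : 0 < c) (F : ℕ → ℕ → A) :
    ∑ k ∈ range (b + 1), ∑ m ∈ range (b + 1), F k m * y ^ (c * k + m) =
      ∑ n ∈ range (b + 1), ∑ k ∈ range (n / c + 1), F k (n - c * k) * y ^ n := by
  calc _ = ∑ k ∈ range (b + 1), ∑ n ∈ Ico (c * k) (b + 1), F k (n - c * k) * y ^ n := by
        refine sum_congr rfl fun k _ => ?_
        rw [sum_Ico_eq_sum_range]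
        simp only [add_tsub_cancel_left]
        refine eventually_constant_sum (fun m hm => ?_) (Nat.sub_le _ _)
        rw [pow_eq_zero_of_le (by omega) hy, mul_zero]
    _ = _ := by
        refine sum_comm' fun k n => ?_
        have := Nat.le_mul_of_pos_left k hc
        simp only [mem_range, mem_Ico, Nat.lt_succ_iff, Nat.le_div_iff_mul_le hc, mul_comm k c]
        omega

theorem MvPowerSeries.coeff_eq_zero_of_mem_span_X_pow {σ R : Type*} [Fintype σ] [CommSemiring R]
    {d : σ →₀ ℕ} {f : MvPowerSeries σ R}
    (hf : f ∈ Ideal.span (Set.range fun i => (X i : MvPowerSeries σ R) ^ (d i + 1))) :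
    coeff d f = 0 := by
  obtain ⟨c, rfl⟩ := Ideal.mem_span_range_iff_exists_fun.1 hf
  rw [map_sum]
  exact sum_eq_zero fun i _ => X_pow_dvd_iff.1 (dvd_mul_left _ _) d (Nat.lt_succ_self _)

open MvPowerSeries

@[simp] theorem constantCoeff_qv : constantCoeff qv = 0 := constantCoeff_X 0

@[simp] theorem constantCoeff_xv : constantCoeff xv = 0 := constantCoeff_X 1

@[simp] theorem constantCoeff_Rv : constantCoeff Rv = 0 := by simp [Rv]

theorem constantCoeff_one_sub_mul_ne_zero {A : M} (hA : constantCoeff A = 0) (B : M) :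
    constantCoeff (1 - A * B) ≠ 0 := by
  simp [hA]

theorem constantCoeff_one_sub_Rq_mul_ne_zero (n : ℕ) : constantCoeff (1 - Rq * qv ^ n) ≠ 0 := by
  rcases n with _ | n
  · have h : (1 - MvPolynomial.X 1 : MvPolynomial (Fin 2) ℚ) ≠ 0 := fun h => by
      simpa using congrArg MvPolynomial.constantCoeff h
    simpa [Rq] using (map_ne_zero_iff _ (IsFractionRing.injective _ Kc)).2 h
  · simp [pow_succ]

@[simp] theorem pch_zero (A Q : M) : pch A Q 0 = 1 := prod_range_zero _

theorem pch_succ (A Q : M) (n : ℕ) : pch A Q (n + 1) = pch A Q n * (1 - A * Q ^ n) :=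
  prod_range_succ _ _

theorem pch_succ' (A Q : M) (n : ℕ) : pch A Q (n + 1) = (1 - A) * pch (A * Q) Q n := by
  simp only [pch, prod_range_succ', pow_succ, pow_zero, mul_one, mul_assoc, mul_comm]

theorem pch_add (A Q : M) (s t : ℕ) : pch A Q (s + t) = pch A Q s * pch (A * Q ^ s) Q t := by
  simp only [pch, prod_range_add, pow_add, mul_assoc]

theorem constantCoeff_pch_ne_zero {A Q : M} {n : ℕ}
    (h : ∀ j < n, constantCoeff (1 - A * Q ^ j) ≠ 0) : constantCoeff (pch A Q n) ≠ 0 := by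
  rw [pch, map_prod]
  exact prod_ne_zero_iff.2 fun j hj => h j (mem_range.1 hj)

theorem inv_pch_succ_mul {A Q : M} {n : ℕ} (h : constantCoeff (1 - A * Q ^ n) ≠ 0) :
    (pch A Q (n + 1))⁻¹ * (1 - A * Q ^ n) = (pch A Q n)⁻¹ := by
  rw [pch_succ, MvPowerSeries.mul_inv_rev, mul_right_comm, MvPowerSeries.inv_mul_cancel _ h,
    one_mul]

theorem pch_qv_mul_inv (n : ℕ) : pch qv qv n * (pch qv qv n)⁻¹ = 1 :=
  MvPowerSeries.mul_inv_cancel _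
    (constantCoeff_pch_ne_zero fun _ _ => constantCoeff_one_sub_mul_ne_zero constantCoeff_qv _)

theorem inv_pch_qv_succ (n : ℕ) :
    (pch qv qv n)⁻¹ = (1 - qv ^ (n + 1)) * (pch qv qv (n + 1))⁻¹ := by
  rw [← inv_pch_succ_mul (constantCoeff_one_sub_mul_ne_zero constantCoeff_qv (qv ^ n)),
    ← pow_succ', mul_comm]

def qbinom (N i : ℕ) : M :=
  if i ≤ N then pch qv qv N * (pch qv qv i)⁻¹ * (pch qv qv (N - i))⁻¹ else 0

theorem qbinom_zero_right (N : ℕ) : qbinom N 0 = 1 := by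
  simp [qbinom, pch_qv_mul_inv]

theorem qbinom_self (N : ℕ) : qbinom N N = 1 := by
  simp [qbinom, pch_qv_mul_inv]

theorem qbinom_of_lt {N i : ℕ} (h : N < i) : qbinom N i = 0 := if_neg (by omega)

theorem qbinom_succ_succ (N i : ℕ) :
    qbinom (N + 1) (i + 1) = qbinom N i + qv ^ (i + 1) * qbinom N (i + 1) := by
  rcases lt_trichotomy (i + 1) (N + 1) with h | h | h
  · obtain ⟨t, rfl⟩ : ∃ t, N = i + 1 + t := ⟨N - (i + 1), by omega⟩
    simp only [qbinom, if_pos (by omega : i + 1 ≤ i + 1 + t + 1), if_pos (by omega : i ≤ i + 1 + t),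
      if_pos (by omega : i + 1 ≤ i + 1 + t), show i + 1 + t + 1 - (i + 1) = t + 1 by omega,
      show i + 1 + t - i = t + 1 by omega, show i + 1 + t - (i + 1) = t by omega,
      inv_pch_qv_succ i, inv_pch_qv_succ t,
      pch_succ qv qv (i + 1 + t), ← pow_succ']
    ring
  · obtain rfl : i = N := by omega
    rw [qbinom_self, qbinom_self, qbinom_of_lt (Nat.lt_succ_self i), mul_zero, add_zero]
  · rw [qbinom_of_lt h, qbinom_of_lt (by omega), qbinom_of_lt (by omega), mul_zero, add_zero]

theorem pch_qv_eq_sum_qbinom (Y : M) (N : ℕ) :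
    pch Y qv N = ∑ i ∈ range (N + 1), (-1) ^ i * qv ^ i.choose 2 * qbinom N i * Y ^ i := by
  set t : ℕ → ℕ → M := fun N i => (-1) ^ i * qv ^ i.choose 2 * qbinom N i
  show pch Y qv N = ∑ i ∈ range (N + 1), t N i * Y ^ i
  induction N generalizing Y with
  | zero => simp [t, qbinom_zero_right]
  | succ N ih =>
    have hstep : ∀ i, t (N + 1) (i + 1) * Y ^ (i + 1) =
        t N (i + 1) * (Y * qv) ^ (i + 1) - Y * (t N i * (Y * qv) ^ i) := fun i => by
      simp only [t, qbinom_succ_succ, Nat.choose_succ_succ', Nat.choose_one_right]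
      ring
    have hshift : ∑ i ∈ range (N + 1), t N (i + 1) * (Y * qv) ^ (i + 1) + t N 0 * (Y * qv) ^ 0 =
        ∑ i ∈ range (N + 1), t N i * (Y * qv) ^ i + t N (N + 1) * (Y * qv) ^ (N + 1) := by
      rw [← sum_range_succ' (fun i => t N i * (Y * qv) ^ i), sum_range_succ]
    have htop : t N (N + 1) = 0 := by simp [t, qbinom_of_lt]
    have hzero : ∀ N, t N 0 = 1 := by simp [t, qbinom_zero_right]
    rw [htop, hzero] at hshift
    rw [pch_succ', ih, sum_range_succ' (fun i => t (N + 1) i * Y ^ i),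
      sum_congr rfl fun i _ => hstep i, sum_sub_distrib, ← mul_sum, hzero]
    linear_combination -hshift

theorem pch_mul_inv_pch_qv_eq_sum (Z : M) (n : ℕ) :
    pch Z qv n * (pch qv qv n)⁻¹ = ∑ i ∈ range (n + 1),
      (-1) ^ i * qv ^ i.choose 2 * (pch qv qv i)⁻¹ * Z ^ i * (pch qv qv (n - i))⁻¹ := by
  rw [pch_qv_eq_sum_qbinom, sum_mul]
  refine sum_congr rfl fun i hi => ?_
  have hqbinom : qbinom n i * (pch qv qv n)⁻¹ = (pch qv qv i)⁻¹ * (pch qv qv (n - i))⁻¹ := by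
    rw [qbinom, if_pos (Nat.lt_succ_iff.1 (mem_range.1 hi))]
    linear_combination (pch qv qv i)⁻¹ * (pch qv qv (n - i))⁻¹ * pch_qv_mul_inv n
  linear_combination (-1) ^ i * qv ^ i.choose 2 * Z ^ i * hqbinom

theorem qbinom_eq_pch_mul_inv {N i : ℕ} (h : i ≤ N) :
    qbinom N i = pch (qv ^ (N - i + 1)) qv i * (pch qv qv i)⁻¹ := by
  have hsplit := pch_add qv qv (N - i) i
  rw [Nat.sub_add_cancel h, ← pow_succ'] at hsplit
  rw [qbinom, if_pos h, hsplit]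
  linear_combination pch (qv ^ (N - i + 1)) qv i * (pch qv qv i)⁻¹ * pch_qv_mul_inv (N - i)

section ReductionModulo

variable {A : Type*} [CommRing A] (φ : M →+* A) {a b N : ℕ}

theorem map_qbinom (hq : φ qv ^ (a + 1) = 0) {i : ℕ} (h : a + i ≤ N) :
    φ (qbinom N i) = φ (pch qv qv i)⁻¹ := by
  rw [qbinom_eq_pch_mul_inv (by omega), map_mul, pch, map_prod,
    prod_eq_one fun j _ => ?_, one_mul]
  rw [map_sub, map_one, map_mul, map_pow, map_pow, ← pow_add,
    pow_eq_zero_of_le (by omega) hq, sub_zero]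

theorem map_pch_mul_xv (hq : φ qv ^ (a + 1) = 0) (hx : φ xv ^ (b + 1) = 0) (hN : a + b ≤ N)
    (Z : M) : φ (pch (Z * xv) qv N) = ∑ i ∈ range (b + 1),
      φ ((-1) ^ i * qv ^ i.choose 2 * (pch qv qv i)⁻¹ * Z ^ i) * φ xv ^ i := by
  rw [pch_qv_eq_sum_qbinom, map_sum,
    eventually_constant_sum (N := b + 1) (fun i hi => ?_) (by omega)]
  · refine sum_congr rfl fun i hi => ?_
    simp only [map_mul, map_pow, map_qbinom φ hq (show a + i ≤ N by linarith [mem_range.1 hi])]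
    ring
  · simp [mul_pow, pow_eq_zero_of_le hi hx]

theorem map_pch_mul_xv_mul_sum (hq : φ qv ^ (a + 1) = 0) (hx : φ xv ^ (b + 1) = 0)
    (hN : a + b ≤ N) (Z : M) :
    φ (pch (Z * xv) qv N) * ∑ m ∈ range (b + 1), φ (pch qv qv m)⁻¹ * φ xv ^ m =
      ∑ n ∈ range (b + 1), φ (pch Z qv n * (pch qv qv n)⁻¹) * φ xv ^ n := by
  set α : ℕ → A := fun i => φ ((-1) ^ i * qv ^ i.choose 2 * (pch qv qv i)⁻¹ * Z ^ i)
  calc _ = ∑ i ∈ range (b + 1), ∑ m ∈ range (b + 1),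
        α i * φ (pch qv qv m)⁻¹ * φ xv ^ (1 * i + m) := by
        rw [map_pch_mul_xv φ hq hx hN, sum_mul_sum]
        refine sum_congr rfl fun i _ => sum_congr rfl fun m _ => ?_
        ring
    _ = ∑ n ∈ range (b + 1), ∑ i ∈ range (n / 1 + 1),
        α i * φ (pch qv qv (n - 1 * i))⁻¹ * φ xv ^ n :=
      sum_sum_mul_pow_eq_of_pow_eq_zero hx one_pos _
    _ = _ := by
        refine sum_congr rfl fun n _ => ?_
        simp only [α, Nat.div_one, one_mul, ← sum_mul, pch_mul_inv_pch_qv_eq_sum, map_sum, map_mul]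

theorem map_inv_pch_xv (hq : φ qv ^ (a + 1) = 0) (hx : φ xv ^ (b + 1) = 0) (hN : a + b ≤ N) :
    φ (pch xv qv N)⁻¹ = ∑ m ∈ range (b + 1), φ (pch qv qv m)⁻¹ * φ xv ^ m := by
  have hS : ∑ n ∈ range (b + 1), φ (pch 1 qv n * (pch qv qv n)⁻¹) * φ xv ^ n = 1 := by
    rw [sum_eq_single_of_mem 0 (by simp) fun n _ hn => ?_]
    · simp
    · obtain ⟨n, rfl⟩ := Nat.exists_eq_succ_of_ne_zero hn
      rw [pch_succ', sub_self, zero_mul, zero_mul, map_zero, zero_mul]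
  have h := map_pch_mul_xv_mul_sum φ hq hx hN 1
  rw [one_mul, hS] at h
  have hunit := congrArg φ <| MvPowerSeries.inv_mul_cancel (pch xv qv N)
    (constantCoeff_pch_ne_zero fun _ _ => constantCoeff_one_sub_mul_ne_zero constantCoeff_xv _)
  rw [map_mul, map_one] at hunit
  linear_combination (∑ m ∈ range (b + 1), φ (pch qv qv m)⁻¹ * φ xv ^ m) * hunit -
    φ (pch xv qv N)⁻¹ * h

theorem map_pch_mul_inv_pch_xv (hq : φ qv ^ (a + 1) = 0) (hx : φ xv ^ (b + 1) = 0)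
    (hN : a + b ≤ N) (Z : M) :
    φ (pch (Z * xv) qv N * (pch xv qv N)⁻¹) =
      ∑ n ∈ range (b + 1), φ (pch Z qv n * (pch qv qv n)⁻¹) * φ xv ^ n := by
  rw [map_mul, map_inv_pch_xv φ hq hx hN, map_pch_mul_xv_mul_sum φ hq hx hN]

end ReductionModulo

def quadCoeff (k : ℕ) : M :=
  (pch (qv ^ 2) (qv ^ 2) k)⁻¹ * (pch Rv (qv ^ 2) k)⁻¹ * qv ^ (k * (2 * k - 2)) * Rv ^ k

def quadSum (n : ℕ) : M := ∑ k ∈ range (n / 2 + 1), quadCoeff k * (pch qv qv (n - 2 * k))⁻¹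

theorem quadCoeff_succ (k : ℕ) :
    quadCoeff (k + 1) * (1 - qv ^ (2 * k + 2)) * (1 - Rq * qv ^ (2 * k + 1)) =
      quadCoeff k * qv ^ (4 * k) * Rv := by
  have hq := inv_pch_succ_mul (A := qv ^ 2) (Q := qv ^ 2) (n := k)
    (constantCoeff_one_sub_mul_ne_zero (by simp) _)
  have hR := inv_pch_succ_mul (A := Rv) (Q := qv ^ 2) (n := k)
    (constantCoeff_one_sub_mul_ne_zero constantCoeff_Rv _)
  rw [← pow_mul, ← pow_add, add_comm 2] at hq
  rw [Rv, ← pow_mul, mul_assoc, ← pow_succ', ← Rv] at hR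
  have hexp : (k + 1) * (2 * (k + 1) - 2) = k * (2 * k - 2) + 4 * k := by
    rcases k with _ | k
    · rfl
    · rw [show 2 * (k + 1 + 1) - 2 = 2 * k + 2 by omega, show 2 * (k + 1) - 2 = 2 * k by omega]
      ring
  rw [quadCoeff, quadCoeff, hexp]
  linear_combination qv ^ (k * (2 * k - 2) + 4 * k) * Rv ^ (k + 1) *
    ((pch Rv (qv ^ 2) (k + 1))⁻¹ * (1 - Rq * qv ^ (2 * k + 1)) * hq +
      (pch (qv ^ 2) (qv ^ 2) k)⁻¹ * hR)

-- At `k = 0` the truncated `2 * k - 1` is harmless: the factor `1 - qv ^ 0` vanishes.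
def quadTelescope (n k : ℕ) : M :=
  qv ^ (n - 2 * k) * (1 - qv ^ (2 * k)) * (1 - Rq * qv ^ (2 * k - 1)) * quadCoeff k *
    (pch qv qv (n - 2 * k))⁻¹

theorem quadTelescope_zero_right (n : ℕ) : quadTelescope n 0 = 0 := by
  simp [quadTelescope]

theorem quadSum_summand_recurrence {n k : ℕ} (h : 2 * k + 1 ≤ n) :
    (1 - qv ^ (n + 1)) * (1 - Rq * qv ^ n) * (quadCoeff k * (pch qv qv (n + 1 - 2 * k))⁻¹) -
        (1 - Rq * qv ^ (2 * n)) * (quadCoeff k * (pch qv qv (n - 2 * k))⁻¹) =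
      quadTelescope (n + 1) k - quadTelescope (n + 1) (k + 1) := by
  obtain ⟨m, rfl⟩ : ∃ m, n = m + 2 * k + 1 := ⟨n - (2 * k + 1), by omega⟩
  have hck := quadCoeff_succ k
  rw [Rv] at hck
  rw [quadTelescope, quadTelescope, show m + 2 * k + 1 + 1 - 2 * k = m + 1 + 1 by omega,
    show m + 2 * k + 1 - 2 * k = m + 1 by omega, show m + 2 * k + 1 + 1 - 2 * (k + 1) = m by omega,
    show 2 * (k + 1) = 2 * k + 2 by ring, show 2 * k + 2 - 1 = 2 * k + 1 by omega,
    inv_pch_qv_succ m, inv_pch_qv_succ (m + 1)]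
  rcases k with _ | k
  · linear_combination
      qv ^ m * (1 - qv ^ (m + 1)) * (1 - qv ^ (m + 1 + 1)) * (pch qv qv (m + 1 + 1))⁻¹ * hck
  · rw [show 2 * (k + 1) - 1 = 2 * k + 1 by omega]
    linear_combination
      qv ^ m * (1 - qv ^ (m + 1)) * (1 - qv ^ (m + 1 + 1)) * (pch qv qv (m + 1 + 1))⁻¹ * hck

theorem quadSum_succ (n : ℕ) :
    (1 - qv ^ (n + 1)) * (1 - Rq * qv ^ n) * quadSum (n + 1) =
      (1 - Rq * qv ^ (2 * n)) * quadSum n := by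
  have htel : ∀ K, 2 * K ≤ n + 1 →
      (1 - qv ^ (n + 1)) * (1 - Rq * qv ^ n) *
          ∑ k ∈ range K, quadCoeff k * (pch qv qv (n + 1 - 2 * k))⁻¹ -
        (1 - Rq * qv ^ (2 * n)) * ∑ k ∈ range K, quadCoeff k * (pch qv qv (n - 2 * k))⁻¹ =
      -quadTelescope (n + 1) K := fun K hK => by
    rw [mul_sum, mul_sum, ← sum_sub_distrib,
      sum_congr rfl fun k hk => quadSum_summand_recurrence (by linarith [mem_range.1 hk]),
      sum_range_sub', quadTelescope_zero_right, zero_sub]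
  rw [← sub_eq_zero]
  obtain ⟨K, rfl | rfl⟩ := Nat.even_or_odd' n
  · have hlast :
        (1 - qv ^ (2 * K + 1)) * (1 - Rq * qv ^ (2 * K)) * (quadCoeff K * (pch qv qv 1)⁻¹) -
          (1 - Rq * qv ^ (2 * (2 * K))) * (quadCoeff K * (pch qv qv 0)⁻¹) =
        quadTelescope (2 * K + 1) K := by
      rw [quadTelescope, show 2 * K + 1 - 2 * K = 1 by omega, inv_pch_qv_succ 0]
      rcases K with _ | K
      · ring
      · rw [show 2 * (K + 1) - 1 = 2 * K + 1 by omega]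
        ring
    rw [quadSum, quadSum, show (2 * K + 1) / 2 = K by omega, show 2 * K / 2 = K by omega,
      sum_range_succ, sum_range_succ, show 2 * K + 1 - 2 * K = 1 by omega, Nat.sub_self]
    linear_combination htel K (by omega) + hlast
  · have hlast : (1 - qv ^ (2 * K + 1 + 1)) * (1 - Rq * qv ^ (2 * K + 1)) *
        (quadCoeff (K + 1) * (pch qv qv 0)⁻¹) = quadTelescope (2 * K + 1 + 1) (K + 1) := by
      rw [quadTelescope, show 2 * K + 1 + 1 - 2 * (K + 1) = 0 by omega,
        show 2 * (K + 1) - 1 = 2 * K + 1 by omega]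
      ring
    rw [quadSum, quadSum, show (2 * K + 1 + 1) / 2 = K + 1 by omega,
      show (2 * K + 1) / 2 = K by omega, sum_range_succ _ (K + 1),
      show 2 * K + 1 + 1 - 2 * (K + 1) = 0 by omega]
    linear_combination htel (K + 1) (by omega) + hlast

theorem quadSum_eq (n : ℕ) :
    quadSum n = pch Rq (qv ^ 2) n * (pch qv qv n)⁻¹ * (pch Rq qv n)⁻¹ := by
  induction n with
  | zero => simp [quadSum, quadCoeff]
  | succ n ih =>
    have hcc : constantCoeff ((1 - qv ^ (n + 1)) * (1 - Rq * qv ^ n)) ≠ 0 := by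
      rw [map_mul]
      exact mul_ne_zero (by simp) (constantCoeff_one_sub_Rq_mul_ne_zero n)
    refine mul_left_cancel₀ (a := (1 - qv ^ (n + 1)) * (1 - Rq * qv ^ n))
      (fun h => hcc (by rw [h, map_zero])) ?_
    have hR := inv_pch_succ_mul (constantCoeff_one_sub_Rq_mul_ne_zero n)
    rw [quadSum_succ, ih, pch_succ, ← pow_mul, inv_pch_qv_succ n, ← hR]
    ring

theorem sum_pch_mul_quadCoeff (Y : M) (n : ℕ) :
    ∑ k ∈ range (n / 2 + 1), pch Y qv (2 * k) * quadCoeff k *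
        (pch (Y * qv ^ (2 * k)) qv (n - 2 * k) * (pch qv qv (n - 2 * k))⁻¹) =
      pch Y qv n * pch Rq (qv ^ 2) n * (pch qv qv n)⁻¹ * (pch Rq qv n)⁻¹ := by
  rw [mul_assoc, mul_assoc, ← mul_assoc (pch Rq (qv ^ 2) n), ← quadSum_eq, quadSum, mul_sum]
  refine sum_congr rfl fun k hk => ?_
  have hsplit := pch_add Y qv (2 * k) (n - 2 * k)
  rw [Nat.add_sub_cancel' (by linarith [mem_range.1 hk, Nat.div_mul_le_self n 2])] at hsplit
  rw [hsplit]
  ring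

theorem map_quadratic_transformation {A : Type*} [CommRing A] (φ : M →+* A) {a b N : ℕ}
    (hq : φ qv ^ (a + 1) = 0) (hx : φ xv ^ (b + 1) = 0) (hN : a + b + 1 ≤ N) :
    φ (∑ n ∈ Finset.range N,
        pch (Dv ^ 2) qv n * pch Rq (qv ^ 2) n * (pch qv qv n)⁻¹ * (pch Rq qv n)⁻¹ * xv ^ n) =
      φ (∑ k ∈ Finset.range N,
        pch (Dv ^ 2) qv (2 * k) * (pch (qv ^ 2) (qv ^ 2) k)⁻¹ * (pch Rv (qv ^ 2) k)⁻¹ *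
          ((∏ j ∈ Finset.range N, (1 - Dv ^ 2 * xv * qv ^ (2 * k) * qv ^ j)) *
            (∏ j ∈ Finset.range N, (1 - xv * qv ^ j))⁻¹) *
          qv ^ (k * (2 * k - 2)) * Rv ^ k * xv ^ (2 * k)) := by
  set L : ℕ → M := fun n =>
    pch (Dv ^ 2) qv n * pch Rq (qv ^ 2) n * (pch qv qv n)⁻¹ * (pch Rq qv n)⁻¹
  set W : ℕ → M := fun k => pch (Dv ^ 2) qv (2 * k) * quadCoeff k
  set Z : ℕ → M := fun k => Dv ^ 2 * qv ^ (2 * k)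
  calc _ = ∑ n ∈ range (b + 1), φ (L n) * φ xv ^ n := by
        rw [map_sum, eventually_constant_sum (N := b + 1) (fun n hn => ?_) (by omega)]
        · exact sum_congr rfl fun n _ => by rw [map_mul, map_pow]
        · rw [map_mul, map_pow, pow_eq_zero_of_le hn hx, mul_zero]
    _ = ∑ n ∈ range (b + 1), ∑ k ∈ range (n / 2 + 1),
          φ (W k) * φ (pch (Z k) qv (n - 2 * k) * (pch qv qv (n - 2 * k))⁻¹) * φ xv ^ n := by
        refine sum_congr rfl fun n _ => ?_
        simp only [L, W, Z, ← sum_pch_mul_quadCoeff (Dv ^ 2) n, map_sum, sum_mul, map_mul]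
    _ = ∑ k ∈ range (b + 1), ∑ m ∈ range (b + 1),
          φ (W k) * φ (pch (Z k) qv m * (pch qv qv m)⁻¹) * φ xv ^ (2 * k + m) :=
        (sum_sum_mul_pow_eq_of_pow_eq_zero hx two_pos
          fun k m => φ (W k) * φ (pch (Z k) qv m * (pch qv qv m)⁻¹)).symm
    _ = ∑ k ∈ range N, φ (W k) * φ (pch (Z k * xv) qv N * (pch xv qv N)⁻¹) * φ xv ^ (2 * k) := by
        rw [eventually_constant_sum (N := b + 1) (n := N) (fun k hk => ?_) (by omega)]
        · refine sum_congr rfl fun k _ => ?_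
          rw [map_pch_mul_inv_pch_xv φ hq hx (by omega), mul_sum, sum_mul]
          exact sum_congr rfl fun m _ => by ring
        · rw [pow_eq_zero_of_le (by omega) hx, mul_zero]
    _ = _ := by
        rw [map_sum]
        refine sum_congr rfl fun k _ => ?_
        have hprod : ∏ j ∈ range N, (1 - Dv ^ 2 * xv * qv ^ (2 * k) * qv ^ j) =
            pch (Z k * xv) qv N := prod_congr rfl fun j _ => by ring
        rw [hprod, show ∏ j ∈ range N, (1 - xv * qv ^ j) = pch xv qv N from rfl]
        simp only [W, quadCoeff, map_mul, map_pow]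
        ring

/-- Quadratic transformation (Proposition A.6): as formal power series in `x`,
`∑_{n=0}^∞ (D²;q)_n (R/q;q²)_n / ((q;q)_n (R/q;q)_n) xⁿ
 = ∑_{k=0}^∞ (D²;q)_{2k}/((q²;q²)_k (R;q²)_k) · (D²xq^{2k};q)_∞/(x;q)_∞ · q^{k(2k-2)} R^k x^{2k}`,
where the infinite sums and products are interpreted via stabilization of coefficients of
their truncations (`q` being a formal series variable). -/
theorem quadratic_transformation :
    ∀ d : Fin 2 →₀ ℕ, ∃ N₀ : ℕ, ∀ N ≥ N₀,
      MvPowerSeries.coeff (R := Kc) d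
        (∑ n ∈ Finset.range N,
          pch (Dv ^ 2) qv n * pch Rq (qv ^ 2) n * (pch qv qv n)⁻¹ * (pch Rq qv n)⁻¹ * xv ^ n) =
      MvPowerSeries.coeff (R := Kc) d
        (∑ k ∈ Finset.range N,
          pch (Dv ^ 2) qv (2 * k) * (pch (qv ^ 2) (qv ^ 2) k)⁻¹ * (pch Rv (qv ^ 2) k)⁻¹ *
            ((∏ j ∈ Finset.range N, (1 - Dv ^ 2 * xv * qv ^ (2 * k) * qv ^ j)) *
              (∏ j ∈ Finset.range N, (1 - xv * qv ^ j))⁻¹) *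
            qv ^ (k * (2 * k - 2)) * Rv ^ k * xv ^ (2 * k)) := by
  intro d
  refine ⟨d 0 + d 1 + 1, fun N hN => ?_⟩
  set I : Ideal M := Ideal.span (Set.range fun i => (X i : M) ^ (d i + 1))
  have hX : ∀ i, Ideal.Quotient.mk I (X i) ^ (d i + 1) = 0 := fun i => by
    rw [← map_pow, Ideal.Quotient.eq_zero_iff_mem]
    exact Ideal.subset_span ⟨i, rfl⟩
  rw [← sub_eq_zero, ← map_sub]
  exact MvPowerSeries.coeff_eq_zero_of_mem_span_X_pow <| Ideal.Quotient.eq.1 <|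
    map_quadratic_transformation _ (hX 0) (hX 1) hN

end
end
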